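/- Let T_ω : [0,1] → [0,1] be piecewise monotone maps with monotonicity partition Z_ω^{(n)} for T_ω^n, and let g_{ω,ε}^{(n)} = g_{ω,0}^{(n)} · 1_{X_{ω,n−1,ε}} be weights vanishing on the hole-avoiding set complement. Suppose Z is a collection of pairwise disjoint intervals refining the monotonicity partition such that var_Z(g_{ω,ε}^{(n)}) ≤ 2‖g_{ω,0}^{(n)}‖_∞ on each Z, and ν is a fully supported probability measure on [0,1]. Then for any f of bounded variation, var(L_{ω,ε}^n f) ≤ 9‖g_{ω,ε}^{(n)}‖_∞ var(f) + (8‖g_{ω,ε}^{(n)}‖_∞ / min_{Z} ν(Z)) ν(|f|), where L_{ω,ε}^n f = Σ_Z 1_{T_ω^n(Z)} ((f g_{ω,ε}^{(n)}) ∘ T_{ω,Z}^{−n}). -/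

import Mathlib

open MeasureTheory Set
open scoped ENNReal

/-! A single branch `1_J · ((f g) ∘ ψ)` has variation at most `var_Z (f g) + 2 sup_Z |f g|`:
cutting the interval `J` out adds at most two jumps, and the monotone change of variables `ψ`
does not increase variation. The product rule for variation together with
`sup_Z |f| ≤ var_Z f + ν(|f| 1_Z) / ν(Z)` bounds this by `M (5 var_Z f + 4 ν(|f| 1_Z) / ν(Z))`.
Summing over the branches, the variations of `f` over the disjoint intervals `Z` add up to at
most `var f` and the integrals to at most `ν(|f|)`. -/

section

variable {α E : Type*} [LinearOrder α]

theorem eVariationOn_union_le [PseudoEMetricSpace E] (f : α → E) {A B : Set α}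
    (hAB : ∀ a ∈ A, ∀ b ∈ B, a ≤ b) {C : ℝ≥0∞} (hC : ∀ a ∈ A, ∀ b ∈ B, edist (f b) (f a) ≤ C) :
    eVariationOn f (A ∪ B) ≤ eVariationOn f A + C + eVariationOn f B := by
  classical
  refine iSup_le fun ⟨n, u, hu, us⟩ => ?_
  by_cases hA : ∀ k ≤ n, u k ∈ A
  · calc _ ≤ eVariationOn f A := by
          simpa using eVariationOn.sum_le_of_monotoneOn_Icc (m := 0) (hu.monotoneOn _)
            fun k hk => hA k hk.2
      _ ≤ _ := le_add_right le_self_add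
  have hex : ∃ k, u k ∉ A := by push Not at hA; exact hA.imp fun k hk => hk.2
  obtain ⟨m, hmA, hbefore⟩ : ∃ m, u m ∉ A ∧ ∀ k < m, u k ∈ A :=
    ⟨Nat.find hex, Nat.find_spec hex, fun k hk => not_not.1 (Nat.find_min hex hk)⟩
  have hmn : m ≤ n := by
    by_contra! h
    exact hA fun k hk => hbefore k (hk.trans_lt h)
  have hafter : ∀ k, m ≤ k → u k ∈ B := by
    intro k hk
    refine (us k).resolve_left fun hkA => hmA ?_
    have hmB : u m ∈ B := (us m).resolve_left hmA
    exact (le_antisymm (hu hk) (hAB _ hkA _ hmB)) ▸ hkA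
  have hB : ∑ i ∈ Finset.Ico m n, edist (f (u (i + 1))) (f (u i)) ≤ eVariationOn f B :=
    eVariationOn.sum_le_of_monotoneOn_Icc (hu.monotoneOn _) fun k hk => hafter k hk.1
  rw [Finset.range_eq_Ico]
  cases m with
  | zero => exact hB.trans le_add_self
  | succ j =>
    rw [← Finset.sum_Ico_consecutive _ (Nat.zero_le _) hmn, Finset.sum_Ico_succ_top (Nat.zero_le _)]
    gcongr
    · exact eVariationOn.sum_le_of_monotoneOn_Icc (hu.monotoneOn _)
        fun k hk => hbefore k (Nat.lt_succ_of_le hk.2)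
    · exact hC _ (hbefore j j.lt_succ_self) _ (hafter _ le_rfl)

theorem eVariationOn_indicator_le [NormedAddCommGroup E] (h : α → E) {J : Set α}
    (hJ : J.OrdConnected) (s : Set α) {C : ℝ≥0∞} (hC : ∀ x ∈ J, ‖h x‖ₑ ≤ C) :
    eVariationOn (J.indicator h) s ≤ eVariationOn h (s ∩ J) + 2 * C := by
  set F := J.indicator h
  have hF : ∀ x y, x ∉ J → edist (F y) (F x) ≤ C ∧ edist (F x) (F y) ≤ C := by
    intro x y hx
    have : ‖F y‖ₑ ≤ C := by
      by_cases hy : y ∈ J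
      · simpa [F, hy] using hC y hy
      · simp [F, hy]
    simpa [F, hx, edist_comm (0 : E)] using this
  have hvar_zero : ∀ t ⊆ Jᶜ, eVariationOn F t = 0 := fun t ht =>
    eVariationOn.constant_on <| subsingleton_singleton.anti <| image_subset_iff.2 fun x hx =>
      indicator_of_notMem (ht hx) h
  set L := {x ∈ s | x ∉ J ∧ ∃ y ∈ J, x < y}
  set R := {x ∈ s | x ∉ J ∧ ∀ y ∈ J, y < x}
  have hs : s = L ∪ ((s ∩ J) ∪ R) := by
    ext x
    refine ⟨fun hx => ?_, by rintro (h | h | h) <;> exact h.1⟩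
    by_cases hxJ : x ∈ J
    · exact Or.inr (Or.inl ⟨hx, hxJ⟩)
    by_cases hxy : ∃ y ∈ J, x < y
    · exact Or.inl ⟨hx, hxJ, hxy⟩
    push Not at hxy
    exact Or.inr (Or.inr ⟨hx, hxJ, fun y hy => (hxy y hy).lt_of_ne fun hyx => hxJ (hyx ▸ hy)⟩)
  have hLM : ∀ a ∈ L, ∀ b ∈ (s ∩ J) ∪ R, a ≤ b := by
    rintro a ⟨-, haJ, y, hy, hay⟩ b (⟨-, hb⟩ | ⟨-, -, hb⟩)
    · exact not_lt.1 fun hba => haJ (hJ.out hb hy ⟨hba.le, hay.le⟩)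
    · exact (hay.trans (hb y hy)).le
  have hMR : ∀ a ∈ s ∩ J, ∀ b ∈ R, a ≤ b := fun a ha b hb => (hb.2.2 a ha.2).le
  calc eVariationOn F s
      ≤ eVariationOn F L + C + (eVariationOn F (s ∩ J) + C + eVariationOn F R) := by
        conv_lhs => rw [hs]
        refine (eVariationOn_union_le F hLM fun a ha b _ => (hF a b ha.2.1).1).trans ?_
        gcongr
        exact eVariationOn_union_le F hMR fun a _ b hb => (hF b a hb.2.1).2
    _ = eVariationOn h (s ∩ J) + 2 * C := by
        rw [hvar_zero L fun x hx => hx.2.1, hvar_zero R fun x hx => hx.2.1,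
          eVariationOn.congr fun x hx => indicator_of_mem hx.2 h, zero_add, add_zero]
        ring

theorem Set.OrdConnected.le_of_disjoint {A B : Set α} (hA : A.OrdConnected) (hB : B.OrdConnected)
    (hAB : Disjoint A B) {a b : α} (ha : a ∈ A) (hb : b ∈ B) (hab : a ≤ b) :
    ∀ x ∈ A, ∀ y ∈ B, x ≤ y := by
  intro x hx y hy
  by_contra! hyx
  rcases le_or_gt x b with hxb | hbx
  · exact hAB.ne_of_mem hx (hB.out hy hb ⟨hyx.le, hxb⟩) rfl
  · exact hAB.ne_of_mem (hA.out ha hx ⟨hab, hbx.le⟩) hb rfl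

theorem sum_eVariationOn_le_of_pairwise_disjoint [PseudoEMetricSpace E] {ι : Type*} (f : α → E)
    {Z : ι → Set α} (hconn : ∀ i, (Z i).OrdConnected) (hne : ∀ i, (Z i).Nonempty)
    (hdisj : Pairwise (Function.onFun Disjoint Z)) (t : Finset ι) :
    ∑ i ∈ t, eVariationOn f (Z i) ≤ eVariationOn f (⋃ i ∈ t, Z i) := by
  classical
  choose x hx using hne
  induction t using Finset.induction_on_max_value x with
  | empty => simp
  | insert a t hat hmax ih =>
    rw [Finset.sum_insert hat, Finset.set_biUnion_insert, union_comm, add_comm]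
    refine (add_le_add_left ih _).trans (eVariationOn.add_le_union f ?_)
    simp only [mem_iUnion₂]
    rintro u ⟨i, hi, hu⟩ v hv
    exact (hconn i).le_of_disjoint (hconn a) (hdisj (ne_of_mem_of_not_mem hi hat)) (hx i) (hx a)
      (hmax i hi) u hu v hv

theorem eVariationOn_sum_le [NormedAddCommGroup E] {ι : Type*} (F : ι → α → E)
    (t : Finset ι) (s : Set α) :
    eVariationOn (fun x => ∑ i ∈ t, F i x) s ≤ ∑ i ∈ t, eVariationOn (F i) s := by
  refine iSup_le fun ⟨n, u, hu, us⟩ => ?_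
  calc ∑ k ∈ Finset.range n, edist (∑ i ∈ t, F i (u (k + 1))) (∑ i ∈ t, F i (u k))
      ≤ ∑ k ∈ Finset.range n, ∑ i ∈ t, edist (F i (u (k + 1))) (F i (u k)) := by
        gcongr with k
        simp only [edist_eq_enorm_sub, ← Finset.sum_sub_distrib]
        exact enorm_sum_le t _
    _ = ∑ i ∈ t, ∑ k ∈ Finset.range n, edist (F i (u (k + 1))) (F i (u k)) := Finset.sum_comm
    _ ≤ ∑ i ∈ t, eVariationOn (F i) s := by
        gcongr with i
        exact eVariationOn.sum_le hu us

theorem eVariationOn_indicator_comp_mul_le {β : Type*} [LinearOrder β] {J : Set β} {Z : Set α}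
    (hJ : J.OrdConnected) {ψ : β → α} (hψ : MapsTo ψ J Z)
    (hψmono : MonotoneOn ψ J ∨ AntitoneOn ψ J) {f g : α → ℝ} {A M : ℝ≥0∞}
    (hfA : ∀ x ∈ Z, ‖f x‖ₑ ≤ A) (hgM : ∀ x ∈ Z, ‖g x‖ₑ ≤ M) (s : Set β) :
    eVariationOn (J.indicator fun y => f (ψ y) * g (ψ y)) s ≤
      A * eVariationOn g Z + M * eVariationOn f Z + 2 * (A * M) := by
  calc eVariationOn (J.indicator fun y => f (ψ y) * g (ψ y)) s
      ≤ eVariationOn (fun y => f (ψ y) * g (ψ y)) (s ∩ J) + 2 * (A * M) :=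
        eVariationOn_indicator_le _ hJ s fun y hy => by
          rw [enorm_mul]; exact mul_le_mul' (hfA _ (hψ hy)) (hgM _ (hψ hy))
    _ ≤ eVariationOn (fun x => f x * g x) Z + 2 * (A * M) := by
        grw [eVariationOn.mono _ inter_subset_right]
        gcongr
        rcases hψmono with hmono | hanti
        · exact eVariationOn.comp_le_of_monotoneOn _ ψ hmono hψ
        · exact eVariationOn.comp_le_of_antitoneOn _ ψ hanti hψ
    _ ≤ _ := by grw [eVariationOn_fun_mul_le hfA hgM]

section Measure

variable [TopologicalSpace α] [OrderClosedTopology α] [MeasurableSpace α] [BorelSpace α]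

theorem LocallyBoundedVariationOn.aemeasurable_restrict {f : α → ℝ} {s : Set α}
    (hf : LocallyBoundedVariationOn f s) (hs : MeasurableSet s) (μ : Measure α) :
    AEMeasurable f (μ.restrict s) := by
  obtain ⟨p, q, hp, hq, rfl⟩ := hf.exists_monotoneOn_sub_monotoneOn
  exact (aemeasurable_restrict_of_monotoneOn hs hp).sub
    (aemeasurable_restrict_of_monotoneOn hs hq)

theorem BoundedVariationOn.integrable {f : α → ℝ} {s : Set α}
    (hf : BoundedVariationOn f s) (hs : MeasurableSet s) {x₀ : α} (hx₀ : x₀ ∈ s)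
    (μ : Measure α) [IsFiniteMeasure μ] (hμ : μ sᶜ = 0) : Integrable f μ := by
  have hae : ∀ᵐ x ∂μ, x ∈ s := ae_iff.2 hμ
  have hmeas : AEStronglyMeasurable f μ := by
    rw [← Measure.restrict_eq_self_of_ae_mem hae]
    exact (hf.locallyBoundedVariationOn.aemeasurable_restrict hs μ).aestronglyMeasurable
  refine Integrable.of_bound hmeas (‖f x₀‖ + (eVariationOn f s).toReal) ?_
  filter_upwards [hae] with x hx
  exact norm_le_norm_add_const_of_dist_le (hf.dist_le hx hx₀)

end Measure

theorem enorm_le_eVariationOn_add_setLIntegral_div [MeasurableSpace α] [NormedAddCommGroup E]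
    (f : α → E) {Z : Set α} (hZ : MeasurableSet Z) {ν : Measure α} (h0 : ν Z ≠ 0)
    (htop : ν Z ≠ ∞) {x : α} (hx : x ∈ Z) :
    ‖f x‖ₑ ≤ eVariationOn f Z + (∫⁻ y in Z, ‖f y‖ₑ ∂ν) / ν Z := by
  have key : ‖f x‖ₑ * ν Z ≤ eVariationOn f Z * ν Z + ∫⁻ y in Z, ‖f y‖ₑ ∂ν :=
    calc ‖f x‖ₑ * ν Z = ∫⁻ _ in Z, ‖f x‖ₑ ∂ν := (setLIntegral_const _ _).symm
      _ ≤ ∫⁻ y in Z, (eVariationOn f Z + ‖f y‖ₑ) ∂ν := setLIntegral_mono' hZ fun y hy => by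
          grw [show f x = f y + (f x - f y) by abel, enorm_add_le, ← edist_eq_enorm_sub,
            eVariationOn.edist_le _ hx hy, add_comm]
      _ = eVariationOn f Z * ν Z + ∫⁻ y in Z, ‖f y‖ₑ ∂ν := by
          rw [lintegral_add_left measurable_const, setLIntegral_const]
  calc ‖f x‖ₑ ≤ (eVariationOn f Z * ν Z + ∫⁻ y in Z, ‖f y‖ₑ ∂ν) / ν Z :=
        (ENNReal.le_div_iff_mul_le (.inl h0) (.inl htop)).2 key
    _ = _ := by rw [ENNReal.add_div, ENNReal.mul_div_cancel_right h0 htop]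

end

theorem eVariationOn_transferOperator_le {ι : Type*} [Fintype ι] {s : Set ℝ}
    {Z J : ι → Set ℝ} {ψ : ι → ℝ → ℝ} (hZs : ∀ i, Z i ⊆ s) (hZconn : ∀ i, (Z i).OrdConnected)
    (hZdisj : Pairwise (Function.onFun Disjoint Z)) (hJconn : ∀ i, (J i).OrdConnected)
    (hψ : ∀ i, MapsTo (ψ i) (J i) (Z i))
    (hψmono : ∀ i, MonotoneOn (ψ i) (J i) ∨ AntitoneOn (ψ i) (J i))
    (ν : Measure ℝ) [IsFiniteMeasure ν] {c : ℝ≥0∞} (hc0 : c ≠ 0) (hc : ∀ i, c ≤ ν (Z i))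
    (f g : ℝ → ℝ) {M : ℝ≥0∞} (hgM : ∀ x ∈ s, ‖g x‖ₑ ≤ M)
    (hvarg : ∀ i, eVariationOn g (Z i) ≤ 2 * M) :
    eVariationOn (fun x => ∑ i, (J i).indicator (fun y => f (ψ i y) * g (ψ i y)) x) s ≤
      M * (5 * eVariationOn f s + 4 * ((∫⁻ x, ‖f x‖ₑ ∂ν) / c)) := by
  have hνZ : ∀ i, ν (Z i) ≠ 0 := fun i => (pos_iff_ne_zero.2 hc0 |>.trans_le (hc i)).ne'
  set V : ι → ℝ≥0∞ := fun i => eVariationOn f (Z i)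
  set D : ι → ℝ≥0∞ := fun i => (∫⁻ y in Z i, ‖f y‖ₑ ∂ν) / ν (Z i)
  have hbranch : ∀ i, eVariationOn ((J i).indicator fun y => f (ψ i y) * g (ψ i y)) s ≤
      M * (5 * V i + 4 * D i) := fun i =>
    calc _ ≤ (V i + D i) * eVariationOn g (Z i) + M * V i + 2 * ((V i + D i) * M) :=
          eVariationOn_indicator_comp_mul_le (hJconn i) (hψ i) (hψmono i)
            (fun x hx => enorm_le_eVariationOn_add_setLIntegral_div f (hZconn i).measurableSet
              (hνZ i) (measure_ne_top ν _) hx) (fun x hx => hgM x (hZs i hx)) s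
      _ ≤ (V i + D i) * (2 * M) + M * V i + 2 * ((V i + D i) * M) := by grw [hvarg i]
      _ = M * (5 * V i + 4 * D i) := by ring
  have hV : ∑ i, V i ≤ eVariationOn f s :=
    (sum_eVariationOn_le_of_pairwise_disjoint f hZconn
      (fun i => nonempty_of_measure_ne_zero (hνZ i)) hZdisj Finset.univ).trans
      (eVariationOn.mono f (iUnion₂_subset fun i _ => hZs i))
  have hD : ∑ i, D i ≤ (∫⁻ x, ‖f x‖ₑ ∂ν) / c :=
    calc ∑ i, D i ≤ ∑ i, (∫⁻ y in Z i, ‖f y‖ₑ ∂ν) / c := by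
          gcongr with i; exact ENNReal.div_le_div_left (hc i) _
      _ = (∫⁻ y in ⋃ i, Z i, ‖f y‖ₑ ∂ν) / c := by
          rw [lintegral_iUnion (fun i => (hZconn i).measurableSet) hZdisj, tsum_fintype]
          simp only [div_eq_mul_inv, Finset.sum_mul]
      _ ≤ (∫⁻ x, ‖f x‖ₑ ∂ν) / c := by gcongr; exact Measure.restrict_le_self
  calc _ ≤ ∑ i, eVariationOn ((J i).indicator fun y => f (ψ i y) * g (ψ i y)) s :=
        eVariationOn_sum_le _ _ _
    _ ≤ ∑ i, M * (5 * V i + 4 * D i) := Finset.sum_le_sum fun i _ => hbranch i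
    _ = M * (5 * ∑ i, V i + 4 * ∑ i, D i) := by
        simp only [← Finset.mul_sum, Finset.sum_add_distrib]
    _ ≤ _ := by gcongr

theorem toReal_le_of_le_ofReal_mul_add_div {X V I : ℝ≥0∞} {M c : ℝ} (hM : 0 ≤ M) (hc : 0 < c)
    (hV : V ≠ ∞) (hI : I ≠ ∞) (h : X ≤ ENNReal.ofReal M * (5 * V + 4 * (I / ENNReal.ofReal c))) :
    X.toReal ≤ 9 * M * V.toReal + 8 * M / c * I.toReal := by
  refine (ENNReal.toReal_mono (by finiteness) h).trans ?_
  rw [ENNReal.toReal_mul, ENNReal.toReal_add (by finiteness) (by finiteness)]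
  simp only [ENNReal.toReal_mul, ENNReal.toReal_div, ENNReal.toReal_ofReal hM,
    ENNReal.toReal_ofReal hc.le, ENNReal.toReal_ofNat]
  have hV' := V.toReal_nonneg
  have hIc' := div_nonneg I.toReal_nonneg hc.le
  rw [div_mul_eq_mul_div, mul_div_assoc]
  nlinarith [mul_nonneg hM hV', mul_nonneg hM hIc']

theorem stmt9_general {ι : Type*} [Fintype ι] [Nonempty ι]
    (g : ℝ → ℝ) (hg : BoundedVariationOn g (Set.Icc 0 1))
    (Z J : ι → Set ℝ) (ψ : ι → ℝ → ℝ)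
    (ν : Measure ℝ) [IsProbabilityMeasure ν]
    (hsupp : ν (Set.Icc (0:ℝ) 1)ᶜ = 0)
    (hZsub : ∀ i, Z i ⊆ Set.Icc 0 1) (hZconn : ∀ i, (Z i).OrdConnected)
    (hZdisj : Pairwise (Function.onFun Disjoint Z))
    (hJconn : ∀ i, (J i).OrdConnected)
    (hψ : ∀ i, Set.BijOn (ψ i) (J i) (Z i))
    (hψmono : ∀ i, StrictMonoOn (ψ i) (J i) ∨ StrictAntiOn (ψ i) (J i))
    (M : ℝ) (hM : ∀ x ∈ Set.Icc (0:ℝ) 1, |g x| ≤ M)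
    (hvarg : ∀ i, (eVariationOn g (Z i)).toReal ≤ 2 * M)
    (hνZ : ∀ i, 0 < ν (Z i))
    (f : ℝ → ℝ) (hf : BoundedVariationOn f (Set.Icc 0 1)) :
    (eVariationOn
        (fun x => ∑ i, Set.indicator (J i) (fun y => f (ψ i y) * g (ψ i y)) x)
        (Set.Icc 0 1)).toReal ≤
      9 * M * (eVariationOn f (Set.Icc 0 1)).toReal +
        (8 * M / Finset.univ.inf' Finset.univ_nonempty fun i => (ν (Z i)).toReal) *
          ∫ x, |f x| ∂ν := by
  set c := Finset.univ.inf' Finset.univ_nonempty fun i => (ν (Z i)).toReal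
  have hM0 : 0 ≤ M := (abs_nonneg _).trans (hM 0 ⟨le_rfl, zero_le_one⟩)
  have hc0 : 0 < c := (Finset.lt_inf'_iff _).2 fun i _ =>
    ENNReal.toReal_pos (hνZ i).ne' (measure_ne_top ν _)
  have hgM : ∀ x ∈ Icc (0 : ℝ) 1, ‖g x‖ₑ ≤ ENNReal.ofReal M := fun x hx => by
    rw [Real.enorm_eq_ofReal_abs]; exact ENNReal.ofReal_le_ofReal (hM x hx)
  have hvarg' : ∀ i, eVariationOn g (Z i) ≤ 2 * ENNReal.ofReal M := fun i => by
    rw [← ENNReal.ofReal_toReal (hg.mono (hZsub i)), ← ENNReal.ofReal_ofNat 2,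
      ← ENNReal.ofReal_mul zero_le_two]
    exact ENNReal.ofReal_le_ofReal (hvarg i)
  have hcZ : ∀ i, ENNReal.ofReal c ≤ ν (Z i) := fun i =>
    ENNReal.ofReal_le_of_le_toReal (Finset.inf'_le _ (Finset.mem_univ i))
  have hfint : Integrable f ν := hf.integrable measurableSet_Icc ⟨le_rfl, zero_le_one⟩ ν hsupp
  simp_rw [← Real.norm_eq_abs, integral_norm_eq_lintegral_enorm hfint.1]
  exact toReal_le_of_le_ofReal_mul_add_div hM0 hc0 hf hfint.2.ne <|
    eVariationOn_transferOperator_le hZsub hZconn hZdisj hJconn (fun i => (hψ i).mapsTo)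
      (fun i => (hψmono i).imp StrictMonoOn.monotoneOn StrictAntiOn.antitoneOn) ν
      (ENNReal.ofReal_pos.2 hc0).ne' hcZ f g hgM hvarg'

/-- Lasota–Yorke inequality for an open transfer operator: with pairwise disjoint intervals
`Z i ⊆ [0,1]` refining the monotonicity partition (witnessed by monotone inverse branches
`ψ i : J i → Z i`, `J i = S '' Z i`), a weight `g` with `|g| ≤ M` on `[0,1]` and
`var_{Z i}(g) ≤ 2M`, and a fully supported probability measure `ν` on `[0,1]`, the operator
`L f = Σ_i 1_{J i} ((f·g) ∘ ψ i)` satisfies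
`var(L f) ≤ 9 M var(f) + (8 M / min_i ν(Z i)) ν(|f|)`. -/
theorem stmt9 {ι : Type*} [Fintype ι] [Nonempty ι]
    (S : ℝ → ℝ) (g : ℝ → ℝ) (hg : BoundedVariationOn g (Set.Icc 0 1))
    (Z J : ι → Set ℝ) (ψ : ι → ℝ → ℝ)
    (ν : Measure ℝ) [IsProbabilityMeasure ν]
    (hsupp : ν (Set.Icc (0:ℝ) 1)ᶜ = 0)
    (hfull : ∀ a b : ℝ, 0 ≤ a → a < b → b ≤ 1 → 0 < ν (Set.Icc a b))
    (hZsub : ∀ i, Z i ⊆ Set.Icc 0 1) (hZconn : ∀ i, (Z i).OrdConnected)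
    (hZne : ∀ i, (Z i).Nonempty) (hZmeas : ∀ i, MeasurableSet (Z i))
    (hZdisj : Pairwise (Function.onFun Disjoint Z))
    (hJsub : ∀ i, J i ⊆ Set.Icc 0 1) (hJconn : ∀ i, (J i).OrdConnected)
    (hJ : ∀ i, J i = S '' Z i)
    (hψ : ∀ i, Set.BijOn (ψ i) (J i) (Z i))
    (hψmono : ∀ i, StrictMonoOn (ψ i) (J i) ∨ StrictAntiOn (ψ i) (J i))
    (hψinv : ∀ i, ∀ x ∈ Z i, ψ i (S x) = x)
    (M : ℝ) (hM : ∀ x ∈ Set.Icc (0:ℝ) 1, |g x| ≤ M)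
    (hvarg : ∀ i, (eVariationOn g (Z i)).toReal ≤ 2 * M)
    (hνZ : ∀ i, 0 < ν (Z i))
    (f : ℝ → ℝ) (hf : BoundedVariationOn f (Set.Icc 0 1)) :
    (eVariationOn
        (fun x => ∑ i, Set.indicator (J i) (fun y => f (ψ i y) * g (ψ i y)) x)
        (Set.Icc 0 1)).toReal ≤
      9 * M * (eVariationOn f (Set.Icc 0 1)).toReal +
        (8 * M / Finset.univ.inf' Finset.univ_nonempty fun i => (ν (Z i)).toReal) *
          ∫ x, |f x| ∂ν :=
  stmt9_general g hg Z J ψ ν hsupp hZsub hZconn hZdisj hJconn hψ hψmono M hM hvarg hνZ f hf
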